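/- Let λ ∈ ℝ with λ ≥ r̄ := max_{x∈S} r(x), and let μ be a nonzero λ-eigenmeasure of r̃+J̃. Assume the set Σ = {x ∈ S : r(x) = r̄} has Lebesgue measure zero and that the function x ↦ 1/(r̄ − r(x)) is not Lebesgue-integrable on S. Then λ > r̄. -/

import Mathlib

open MeasureTheory Filter Topology

/-- A finite positive Borel measure μ on S is a λ-eigenmeasure of the operator r̃+J̃ if for
every Borel set A ⊆ S one has ∫_A r dμ + ∫_A (∫_S K(y,x) μ(dy)) dx = λ μ(A). -/
def IsEigenmeasure {d : ℕ} (S : Set (EuclideanSpace ℝ (Fin d)))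
    (r : EuclideanSpace ℝ (Fin d) → ℝ)
    (K : EuclideanSpace ℝ (Fin d) → EuclideanSpace ℝ (Fin d) → ℝ)
    (lam : ℝ) (μ : MeasureTheory.Measure (EuclideanSpace ℝ (Fin d))) : Prop :=
  ∀ A : Set (EuclideanSpace ℝ (Fin d)), MeasurableSet A → A ⊆ S →
    (∫ x in A, r x ∂μ) + (∫ x in A, (∫ y in S, K y x ∂μ)) = lam * (μ A).toReal

/-!
Suppose `λ = r̄`. Then the eigenmeasure equation says that `(r̄ - r) μ` equals the measure with
Lebesgue density `g(x) = ∫_S K(y,x) μ(dy)` on `S`. Since `K` is positive near the diagonal, this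
identity propagates positivity of `μ` from any point of its support to every point of `S` within
distance `ε₀`; as `S` is connected, the support of `μ` contains `S`, so the continuous function `g`
is bounded below on `S` by some `m > 0`. Integrating `1/(r̄ - r)` against both sides of the
identity then gives `m ∫_S 1/(r̄ - r) dx ≤ μ(S) < ∞`, contradicting the non-integrability.
-/

open Metric Set
open scoped ENNReal

lemma IsPreconnected.subset_of_forall_dist_lt_mem {X : Type*} [PseudoMetricSpace X]
    {S T : Set X} (hS : IsPreconnected S) (hT : IsClosed T) (hST : (S ∩ T).Nonempty)
    {ε : ℝ} (hε : 0 < ε) (h : ∀ x ∈ S ∩ T, ∀ y ∈ S, dist y x < ε → y ∈ T) : S ⊆ T := by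
  intro y hy
  by_contra hyT
  have hcover : S ⊆ thickening ε (S ∩ T) ∪ Tᶜ := fun x hx =>
    (em (x ∈ T)).imp (fun hxT => self_subset_thickening hε _ ⟨hx, hxT⟩) id
  obtain ⟨x, hx⟩ := hST
  obtain ⟨w, hwS, hwU, hwT⟩ := hS _ _ isOpen_thickening hT.isOpen_compl hcover
    ⟨x, hx.1, self_subset_thickening hε _ hx⟩ ⟨y, hy, hyT⟩
  obtain ⟨z, hz, hwz⟩ := mem_thickening_iff.1 hwU
  exact hwT (h z hz w hwS hwz)

lemma ENNReal.ofReal_mul_ofReal_one_div_le_one (a : ℝ) :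
    ENNReal.ofReal a * ENNReal.ofReal (1 / a) ≤ 1 := by
  rcases le_or_gt a 0 with ha | ha
  · simp [ENNReal.ofReal_of_nonpos ha]
  · rw [← ENNReal.ofReal_mul ha.le, mul_one_div_cancel ha.ne', ENNReal.ofReal_one]

section Measure

variable {X : Type*} [MeasurableSpace X]

lemma measure_inter_closure_pos [TopologicalSpace X] (ν : Measure X) [ν.IsOpenPosMeasure]
    {Ω U : Set X} (hΩ : IsOpen Ω) (hU : IsOpen U) {y : X} (hyU : y ∈ U) (hyΩ : y ∈ closure Ω) :
    0 < ν (U ∩ closure Ω) :=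
  ((hU.inter hΩ).measure_pos ν (mem_closure_iff.1 hyΩ U hU hyU)).trans_le
    (measure_mono (inter_subset_inter_right U subset_closure))

lemma measure_pos_of_withDensity_eq {μ ν : Measure X} {F G : X → ℝ≥0∞}
    (h : μ.withDensity F = ν.withDensity G) (hG : AEMeasurable G ν) {A : Set X}
    (hGA : ∀ x ∈ A, G x ≠ 0) (hνA : 0 < ν A) : 0 < μ A := by
  have hA : ν.withDensity G A ≠ 0 := by
    rw [Ne, withDensity_apply_eq_zero' hG, inter_eq_right.2 (show A ⊆ {x | G x ≠ 0} from hGA)]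
    exact hνA.ne'
  rw [← h] at hA
  exact pos_iff_ne_zero.2 fun h0 => hA (withDensity_absolutelyContinuous μ F h0)

lemma withDensity_ofReal_eq_of_setIntegral_eq {μ ν : Measure X} {S : Set X}
    (hS : MeasurableSet S) {f g : X → ℝ} (hf : IntegrableOn f S μ) (hg : IntegrableOn g S ν)
    (hf0 : ∀ x ∈ S, 0 ≤ f x) (hg0 : ∀ x ∈ S, 0 ≤ g x)
    (h : ∀ A, MeasurableSet A → A ⊆ S → ∫ x in A, f x ∂μ = ∫ x in A, g x ∂ν) :
    (μ.restrict S).withDensity (fun x => ENNReal.ofReal (f x)) =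
      (ν.restrict S).withDensity (fun x => ENNReal.ofReal (g x)) := by
  ext A hA
  have hAS : MeasurableSet (A ∩ S) := hA.inter hS
  rw [withDensity_apply _ hA, withDensity_apply _ hA, Measure.restrict_restrict hA,
    Measure.restrict_restrict hA,
    ← ofReal_integral_eq_lintegral_ofReal (hf.mono_set inter_subset_right)
      (ae_restrict_of_forall_mem hAS fun x hx => hf0 x hx.2),
    ← ofReal_integral_eq_lintegral_ofReal (hg.mono_set inter_subset_right)
      (ae_restrict_of_forall_mem hAS fun x hx => hg0 x hx.2),
    h _ hAS inter_subset_right]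

lemma lintegral_one_div_sub_le {μ ν : Measure X} {S : Set X} (hS : MeasurableSet S)
    {r g : X → ℝ} {c m : ℝ}
    (hD : (μ.restrict S).withDensity (fun x => ENNReal.ofReal (c - r x)) =
      (ν.restrict S).withDensity (fun x => ENNReal.ofReal (g x)))
    (hrμ : AEMeasurable r (μ.restrict S)) (hrν : AEMeasurable r (ν.restrict S))
    (hg : AEMeasurable g (ν.restrict S)) (hmg : ∀ x ∈ S, m ≤ g x) :
    ENNReal.ofReal m * ∫⁻ x in S, ENNReal.ofReal (1 / (c - r x)) ∂ν ≤ μ S := by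
  have hinv : ∀ ρ : Measure X, AEMeasurable r ρ →
      AEMeasurable (fun x => ENNReal.ofReal (1 / (c - r x))) ρ := fun ρ hr =>
    ENNReal.measurable_ofReal.comp_aemeasurable ((aemeasurable_const.sub hr).const_div 1)
  have hdens : ∀ ρ : Measure X, ∀ φ : X → ℝ, AEMeasurable φ ρ →
      AEMeasurable (fun x => ENNReal.ofReal (φ x)) ρ := fun ρ φ hφ =>
    ENNReal.measurable_ofReal.comp_aemeasurable hφ
  calc ENNReal.ofReal m * ∫⁻ x in S, ENNReal.ofReal (1 / (c - r x)) ∂ν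
      = ∫⁻ x in S, ENNReal.ofReal m * ENNReal.ofReal (1 / (c - r x)) ∂ν :=
        (lintegral_const_mul' _ _ ENNReal.ofReal_ne_top).symm
    _ ≤ ∫⁻ x in S, ENNReal.ofReal (g x) * ENNReal.ofReal (1 / (c - r x)) ∂ν :=
        lintegral_mono_ae <| ae_restrict_of_forall_mem hS fun x hx =>
          mul_le_mul_left (ENNReal.ofReal_le_ofReal (hmg x hx)) _
    _ = ∫⁻ x, ENNReal.ofReal (1 / (c - r x)) ∂(ν.restrict S).withDensity
          (fun x => ENNReal.ofReal (g x)) :=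
        (lintegral_withDensity_eq_lintegral_mul₀ (hdens _ g hg) (hinv _ hrν)).symm
    _ = ∫⁻ x in S, ENNReal.ofReal (c - r x) * ENNReal.ofReal (1 / (c - r x)) ∂μ := by
        rw [← hD]
        exact lintegral_withDensity_eq_lintegral_mul₀
          (hdens _ _ (aemeasurable_const.sub hrμ)) (hinv _ hrμ)
    _ ≤ ∫⁻ _ in S, 1 ∂μ := lintegral_mono fun x => ENNReal.ofReal_mul_ofReal_one_div_le_one _
    _ = μ S := setLIntegral_one S

lemma integrableOn_one_div_sub_of_withDensity_eq {μ ν : Measure X} [IsFiniteMeasure μ]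
    {S : Set X} (hS : MeasurableSet S) {r g : X → ℝ} {c m : ℝ}
    (hD : (μ.restrict S).withDensity (fun x => ENNReal.ofReal (c - r x)) =
      (ν.restrict S).withDensity (fun x => ENNReal.ofReal (g x)))
    (hrμ : AEMeasurable r (μ.restrict S)) (hrν : AEMeasurable r (ν.restrict S))
    (hg : AEMeasurable g (ν.restrict S)) (hm : 0 < m) (hmg : ∀ x ∈ S, m ≤ g x)
    (hrc : ∀ x ∈ S, r x ≤ c) : IntegrableOn (fun x => 1 / (c - r x)) S ν := by
  have hnonneg : 0 ≤ᵐ[ν.restrict S] fun x => 1 / (c - r x) :=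
    ae_restrict_of_forall_mem hS fun x hx => one_div_nonneg.2 (sub_nonneg.2 (hrc x hx))
  refine ⟨((aemeasurable_const.sub hrν).const_div 1).aestronglyMeasurable,
    (hasFiniteIntegral_iff_ofReal hnonneg).2 ?_⟩
  refine ENNReal.lt_top_of_mul_ne_top_right ?_ (ENNReal.ofReal_pos.2 hm).ne'
  exact ((lintegral_one_div_sub_le hS hD hrμ hrν hg hmg).trans_lt (measure_lt_top μ S)).ne

end Measure

section Kernel

variable {X : Type*} [MeasurableSpace X] {S : Set X} {K : X → X → ℝ} {μ : Measure X}

/-- The Lebesgue density of `J̃μ`. -/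
noncomputable def kernelDensity (K : X → X → ℝ) (S : Set X) (μ : Measure X) (x : X) : ℝ :=
  ∫ y in S, K y x ∂μ

lemma kernelDensity_nonneg (hS : MeasurableSet S) (hK : ∀ x ∈ S, ∀ y ∈ S, 0 ≤ K x y)
    {x : X} (hx : x ∈ S) : 0 ≤ kernelDensity K S μ x :=
  setIntegral_nonneg hS fun y hy => hK y hy x hx

lemma continuousOn_kernelDensity [TopologicalSpace X] [T2Space X] [FirstCountableTopology X]
    [OpensMeasurableSpace X] [IsFiniteMeasure μ] (hS : IsCompact S)
    (hK : ContinuousOn (fun q : X × X => K q.1 q.2) (S ×ˢ S)) :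
    ContinuousOn (kernelDensity K S μ) S := by
  obtain ⟨C, hC⟩ := (hS.prod hS).exists_bound_of_continuousOn hK
  have hSm : MeasurableSet S := hS.measurableSet
  refine continuousOn_of_dominated (bound := fun _ => C) (fun x hx => ?_)
    (fun x hx => ae_restrict_of_forall_mem hSm fun y hy => hC (y, x) ⟨hy, hx⟩)
    (integrable_const C) (ae_restrict_of_forall_mem hSm fun y hy => ?_)
  · exact (ContinuousOn.uncurry_right x hx hK).aestronglyMeasurable hSm
  · exact ContinuousOn.uncurry_left y hy hK

lemma kernelDensity_pos [MetricSpace X] [OpensMeasurableSpace X] [IsFiniteMeasure μ]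
    (hS : IsCompact S) (hK : ContinuousOn (fun q : X × X => K q.1 q.2) (S ×ˢ S))
    (hK0 : ∀ x ∈ S, ∀ y ∈ S, 0 ≤ K x y) {ε : ℝ} {x : X} (hx : x ∈ S)
    (hKpos : ∀ y ∈ S, dist x y < ε → 0 < K y x) (hμS : μ Sᶜ = 0) (hμ : 0 < μ (ball x ε)) :
    0 < kernelDensity K S μ x := by
  have hSm : MeasurableSet S := hS.measurableSet
  rw [kernelDensity, setIntegral_pos_iff_support_of_nonneg_ae
    (ae_restrict_of_forall_mem hSm fun y hy => hK0 y hy x hx)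
    ((ContinuousOn.uncurry_right x hx hK).integrableOn_compact hS)]
  rw [← measure_inter_conull hμS] at hμ
  refine hμ.trans_le (measure_mono fun y hy => ⟨?_, hy.2⟩)
  exact (hKpos y hy.2 (mem_ball'.1 hy.1)).ne'

lemma subset_support_of_withDensity_eq [MetricSpace X] [HereditarilyLindelofSpace X]
    {ν : Measure X} (hS : IsPreconnected S) (hμS : 0 < μ S)
    (hν : ∀ y ∈ S, ∀ U, IsOpen U → y ∈ U → 0 < ν (U ∩ S)) {F : X → ℝ≥0∞} {g : X → ℝ}
    (hD : (μ.restrict S).withDensity F =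
      (ν.restrict S).withDensity (fun x => ENNReal.ofReal (g x)))
    (hg : AEMeasurable g (ν.restrict S)) {ε : ℝ} (hε : 0 < ε)
    (hgpos : ∀ z ∈ S, 0 < μ (ball z ε) → 0 < g z) : S ⊆ μ.support := by
  refine hS.subset_of_forall_dist_lt_mem Measure.isClosed_support
    (Measure.nonempty_inter_support_of_pos hμS) hε ?_
  rintro x ⟨-, hx⟩ y hy hxy
  rw [Measure.mem_support_iff_forall]
  intro U hU
  obtain ⟨ρ, hρ, hρU⟩ := Metric.mem_nhds_iff.1 hU
  set A := ball x ε ∩ ball y ρ ∩ S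
  -- for `z ∈ A`, `ball z ε` is a neighbourhood of the support point `x`
  have hgA : ∀ z ∈ A, ENNReal.ofReal (g z) ≠ 0 := fun z hz =>
    (ENNReal.ofReal_pos.2 (hgpos z hz.2 (Measure.mem_support_iff_forall _ |>.1 hx _
      (isOpen_ball.mem_nhds (mem_ball_comm.1 hz.1.1))))).ne'
  have hνA : 0 < ν.restrict S A := by
    refine (hν y hy _ (isOpen_ball.inter isOpen_ball) ⟨hxy, mem_ball_self hρ⟩).trans_le ?_
    simpa only [A, inter_assoc, inter_self] using Measure.le_restrict_apply S A
  refine (measure_pos_of_withDensity_eq hD (ENNReal.measurable_ofReal.comp_aemeasurable hg)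
    hgA hνA).trans_le ((Measure.restrict_apply_le _ _).trans (measure_mono ?_))
  exact fun z hz => hρU hz.1.2

end Kernel

lemma IsEigenmeasure.withDensity_eq {d : ℕ} {S : Set (EuclideanSpace ℝ (Fin d))}
    {r : EuclideanSpace ℝ (Fin d) → ℝ}
    {K : EuclideanSpace ℝ (Fin d) → EuclideanSpace ℝ (Fin d) → ℝ}
    {c : ℝ} {μ : Measure (EuclideanSpace ℝ (Fin d))} [IsFiniteMeasure μ]
    (hμ : IsEigenmeasure S r K c μ) (hS : IsCompact S) (hr : ContinuousOn r S)
    (hK : ContinuousOn (fun q : EuclideanSpace ℝ (Fin d) × EuclideanSpace ℝ (Fin d) =>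
      K q.1 q.2) (S ×ˢ S))
    (hK0 : ∀ x ∈ S, ∀ y ∈ S, 0 ≤ K x y) (hrc : ∀ x ∈ S, r x ≤ c) :
    (μ.restrict S).withDensity (fun x => ENNReal.ofReal (c - r x)) =
      (volume.restrict S).withDensity (fun x => ENNReal.ofReal (kernelDensity K S μ x)) := by
  have hSm : MeasurableSet S := hS.measurableSet
  refine withDensity_ofReal_eq_of_setIntegral_eq hSm
    ((continuousOn_const.sub hr).integrableOn_compact hS)
    ((continuousOn_kernelDensity hS hK).integrableOn_compact hS)
    (fun x hx => sub_nonneg.2 (hrc x hx)) (fun x hx => kernelDensity_nonneg hSm hK0 hx)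
    fun A hA hAS => ?_
  have hAeq := hμ A hA hAS
  rw [integral_sub (integrable_const c) ((hr.integrableOn_compact hS).mono_set hAS),
    setIntegral_const, smul_eq_mul, measureReal_def]
  unfold kernelDensity
  linarith

theorem stmt8_general {d : ℕ}
    (Ω S : Set (EuclideanSpace ℝ (Fin d)))
    (hΩopen : IsOpen Ω)
    (hΩconn : IsConnected Ω) (hSdef : S = closure Ω)
    (hScomp : IsCompact S)
    (r : EuclideanSpace ℝ (Fin d) → ℝ) (hr : ContinuousOn r S)
    (K : EuclideanSpace ℝ (Fin d) → EuclideanSpace ℝ (Fin d) → ℝ)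
    (hK : ContinuousOn (fun q : EuclideanSpace ℝ (Fin d) × EuclideanSpace ℝ (Fin d) =>
      K q.1 q.2) (S ×ˢ S))
    (hKnn : ∀ x ∈ S, ∀ y ∈ S, 0 ≤ K x y)
    (ε₀ c₀ : ℝ) (hε₀ : 0 < ε₀) (hc₀ : 0 < c₀)
    (hKlb : ∀ x ∈ S, ∀ y ∈ S, dist y x < ε₀ → c₀ < K x y)
    (μ : Measure (EuclideanSpace ℝ (Fin d))) [IsFiniteMeasure μ]
    (hμne : μ ≠ 0) (hμS : μ Sᶜ = 0)
    (lam : ℝ) (hμ : IsEigenmeasure S r K lam μ)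
    (rbar : ℝ) (hrbar : IsGreatest (r '' S) rbar) (hlam : rbar ≤ lam)
    (hnotint : ¬ IntegrableOn (fun x => 1 / (rbar - r x)) S volume) :
    rbar < lam := by
  by_contra hlt
  obtain rfl : lam = rbar := le_antisymm (not_lt.1 hlt) hlam
  have hSm : MeasurableSet S := hScomp.measurableSet
  have hrle : ∀ x ∈ S, r x ≤ lam := fun x hx => hrbar.2 ⟨x, hx, rfl⟩
  have hg := continuousOn_kernelDensity (μ := μ) hScomp hK
  have hgm := (hg.aestronglyMeasurable (μ := volume) hSm).aemeasurable
  have hD := hμ.withDensity_eq hScomp hr hK hKnn hrle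
  have hgpos : ∀ z ∈ S, 0 < μ (ball z ε₀) → 0 < kernelDensity K S μ z := fun z hz =>
    kernelDensity_pos hScomp hK hKnn hz (fun y hy h => hc₀.trans (hKlb y hy z hz h)) hμS
  have hμSpos : 0 < μ S := by
    rw [← univ_inter S, measure_inter_conull hμS]
    exact Measure.measure_univ_pos.2 hμne
  have hvol : ∀ y ∈ S, ∀ U, IsOpen U → y ∈ U → 0 < volume (U ∩ S) := by
    subst hSdef
    exact fun y hy U hU hyU => measure_inter_closure_pos volume hΩopen hU hyU hy
  have hsupp : S ⊆ μ.support := subset_support_of_withDensity_eq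
    (hSdef ▸ hΩconn.closure.isPreconnected) hμSpos hvol hD hgm hε₀ hgpos
  obtain ⟨m, hm, hmg⟩ := hScomp.exists_forall_le' hg fun z hz =>
    hgpos z hz (Measure.mem_support_iff_forall _ |>.1 (hsupp hz) _ (ball_mem_nhds z hε₀))
  exact hnotint (integrableOn_one_div_sub_of_withDensity_eq hSm hD
    (hr.aestronglyMeasurable hSm).aemeasurable (hr.aestronglyMeasurable hSm).aemeasurable
    hgm hm hmg hrle)

/-- If λ ≥ r̄, the set Σ = {x ∈ S : r(x) = r̄} is Lebesgue-null and 1/(r̄ − r) is not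
Lebesgue-integrable on S, then every nonzero λ-eigenmeasure of r̃+J̃ satisfies λ > r̄. -/
theorem stmt8 {d : ℕ}
    (Ω S : Set (EuclideanSpace ℝ (Fin d)))
    (hΩne : Ω.Nonempty) (hΩopen : IsOpen Ω) (hΩbdd : Bornology.IsBounded Ω)
    (hΩconn : IsConnected Ω) (hSdef : S = closure Ω)
    (hScomp : IsCompact S) (hSvol : 0 < volume S)
    (r : EuclideanSpace ℝ (Fin d) → ℝ) (hr : ContinuousOn r S)
    (hrpos : ∀ x ∈ S, 0 < r x)
    (K : EuclideanSpace ℝ (Fin d) → EuclideanSpace ℝ (Fin d) → ℝ)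
    (hK : ContinuousOn (fun q : EuclideanSpace ℝ (Fin d) × EuclideanSpace ℝ (Fin d) =>
      K q.1 q.2) (S ×ˢ S))
    (hKnn : ∀ x ∈ S, ∀ y ∈ S, 0 ≤ K x y)
    (ε₀ c₀ : ℝ) (hε₀ : 0 < ε₀) (hc₀ : 0 < c₀)
    (hKlb : ∀ x ∈ S, ∀ y ∈ S, dist y x < ε₀ → c₀ < K x y)
    (μ : Measure (EuclideanSpace ℝ (Fin d))) [IsFiniteMeasure μ]
    (hμne : μ ≠ 0) (hμS : μ Sᶜ = 0)
    (lam : ℝ) (hμ : IsEigenmeasure S r K lam μ)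
    (rbar : ℝ) (hrbar : IsGreatest (r '' S) rbar) (hlam : rbar ≤ lam)
    (hSig : volume {x ∈ S | r x = rbar} = 0)
    (hnotint : ¬ IntegrableOn (fun x => 1 / (rbar - r x)) S volume) :
    rbar < lam :=
  stmt8_general Ω S hΩopen hΩconn hSdef hScomp r hr K hK hKnn ε₀ c₀ hε₀ hc₀ hKlb μ hμne hμS lam hμ
    rbar hrbar hlam hnotint
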